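/- arXiv:math/0105047 — 2 statements merged into one kernel-verified Lean document; each statement's English description precedes it below -/
import Mathlib

section
/- Let h : T^k → T^k be a continuous map homotopic to the identity with h(0) = 0, and let λ ≥ 1 be an integer. Then every continuous map h̃ : T^k → T^k with p_λ ∘ h̃ = h ∘ p_λ and h̃(0) = 0 fixes the whole lattice p_λ^{-1}(0): h̃(a) = a for every a ∈ T^k with λ·a = 0. -/
open Set

/-- The `k`-dimensional torus `T^k = (ℝ/ℤ)^k`, a compact topological abelian group,
equipped with the product (sup) metric coming from the quotient metric on `ℝ/ℤ`. -/
abbrev Torus (k : ℕ) := Fin k → AddCircle (1 : ℝ)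

/-- The representative in `[-1/2, 1/2)` of a point of the circle. -/
noncomputable def torusRep (y : AddCircle (1:ℝ)) : ℝ :=
  (AddCircle.equivIco 1 (-(1/2)) y : ℝ)

lemma torusRep_mem (y : AddCircle (1:ℝ)) : torusRep y ∈ Ico (-(1/2) : ℝ) (-(1/2) + 1) :=
  (AddCircle.equivIco 1 (-(1/2)) y).2

lemma torusRep_coe (y : AddCircle (1:ℝ)) : ((torusRep y : ℝ) : AddCircle (1:ℝ)) = y :=
  (AddCircle.equivIco 1 (-(1/2))).symm_apply_apply y

lemma torusRep_eq_of {y : AddCircle (1:ℝ)} {r : ℝ} (hr : r ∈ Ico (-(1/2) : ℝ) (-(1/2) + 1))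
    (hry : (r : AddCircle (1:ℝ)) = y) : torusRep y = r :=
  (AddCircle.coe_eq_coe_iff_of_mem_Ico (torusRep_mem y) hr).mp (by rw [torusRep_coe, hry])

lemma torusRep_zero : torusRep 0 = 0 :=
  torusRep_eq_of (by norm_num) (by norm_num)

lemma torusRep_continuousAt {y : AddCircle (1:ℝ)} (hy : ‖y‖ < 1/2) :
    ContinuousAt torusRep y := by
  have hne : y ≠ ((-(1/2) : ℝ) : AddCircle (1:ℝ)) := by
    intro hcon
    have : ‖((-(1/2) : ℝ) : AddCircle (1:ℝ))‖ = 1/2 := by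
      rw [AddCircle.norm_eq]
      norm_num [round_eq]
    rw [hcon, this] at hy
    linarith
  exact continuous_subtype_val.continuousAt.comp (AddCircle.continuousAt_equivIco 1 (-(1/2)) hne)

/-- A (local) section of multiplication by `lam` on the circle, based at `0`. -/
noncomputable def torusSec (lam : ℕ) (y : AddCircle (1:ℝ)) : AddCircle (1:ℝ) :=
  ((torusRep y / lam : ℝ) : AddCircle (1:ℝ))

lemma torusSec_smul (lam : ℕ) (hlam : 1 ≤ lam) (y : AddCircle (1:ℝ)) :
    lam • torusSec lam y = y := by
  rw [torusSec, ← AddCircle.coe_nsmul, nsmul_eq_mul,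
    mul_div_cancel₀ _ (by exact_mod_cast Nat.one_le_iff_ne_zero.mp hlam : (lam:ℝ) ≠ 0),
    torusRep_coe]

lemma torusSec_zero (lam : ℕ) : torusSec lam 0 = 0 := by
  rw [torusSec, torusRep_zero]
  norm_num

lemma torusSec_continuousAt (lam : ℕ) {y : AddCircle (1:ℝ)} (hy : ‖y‖ < 1/2) :
    ContinuousAt (torusSec lam) y := by
  apply (AddCircle.continuous_mk' 1).continuousAt.comp
  exact (torusRep_continuousAt hy).div_const _

/-- A continuous map to the circle all of whose values are `lam`-torsion is constant. -/
lemma const_of_torsion {X : Type*} [TopologicalSpace X] [PreconnectedSpace X]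
    (lam : ℕ) (hlam : 1 ≤ lam) (c : X → AddCircle (1:ℝ)) (hc : Continuous c)
    (h0 : ∀ x, lam • c x = 0) (x y : X) : c x = c y := by
  have hS : {u : AddCircle (1:ℝ) | lam • u = 0}.Finite := by
    have hsub : {u : AddCircle (1:ℝ) | lam • u = 0} ⊆
        ⋃ n ∈ Finset.Icc 1 lam, {u : AddCircle (1:ℝ) | addOrderOf u = n} := by
      intro u hu
      have hd : addOrderOf u ∣ lam := addOrderOf_dvd_of_nsmul_eq_zero hu
      have h1 : 0 < addOrderOf u := Nat.pos_of_dvd_of_pos hd (by omega)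
      simp only [Set.mem_iUnion]
      exact ⟨addOrderOf u, by
        simp only [Finset.mem_Icc]
        exact ⟨h1, Nat.le_of_dvd (by omega) hd⟩, rfl⟩
    exact Set.Finite.subset (Set.Finite.biUnion (Finset.finite_toSet _)
      (fun n hn => AddCircle.finite_setOfPred_addOrderOf_eq (p := (1:ℝ))
        (Finset.mem_Icc.mp hn).1)) hsub
  haveI := hS.to_subtype
  exact isPreconnected_univ.constant_of_mapsTo (T := {u : AddCircle (1:ℝ) | lam • u = 0})
    (isDiscrete_iff_discreteTopology.mpr inferInstance) (hc.continuousOn) (fun z _ => h0 z) trivial trivial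

/-- The sequence of step-by-step lifts of a homotopy along multiplication by `lam`. -/
noncomputable def liftSeq (k lam : ℕ) (g0 : Torus k → Torus k)
    (F : C(unitInterval × Torus k, Torus k)) (t : ℕ → unitInterval) :
    ℕ → Torus k → Torus k
  | 0 => g0
  | j+1 => fun x i => liftSeq k lam g0 F t j x i +
      torusSec lam (F (t (j+1), lam • x) i - F (t j, lam • x) i)

/-- **Lemma (lifts of maps homotopic to the identity fix the lattice).**
Let `h : T^k → T^k` be continuous, homotopic to the identity, with `h 0 = 0`, and let
`λ ≥ 1`.  Then every continuous `h̃ : T^k → T^k` with `p_λ ∘ h̃ = h ∘ p_λ` and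
`h̃ 0 = 0` fixes every point of the lattice `p_λ^{-1}(0)`. -/
theorem lift_fixes_lattice (k lam : ℕ) (hlam : 1 ≤ lam)
    (h : C(Torus k, Torus k)) (hh : h.Homotopic (ContinuousMap.id (Torus k)))
    (h0 : h 0 = 0)
    (ht : Torus k → Torus k) (htc : Continuous ht)
    (hcomm : ∀ a : Torus k, lam • ht a = h (lam • a)) (ht0 : ht 0 = 0) :
    ∀ a : Torus k, lam • a = 0 → ht a = a := by
  intro a ha
  obtain ⟨F⟩ := hh
  set Fc : C(unitInterval × Torus k, Torus k) := F.toContinuousMap with hFc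
  have hUC : UniformContinuous Fc := CompactSpace.uniformContinuous_of_continuous Fc.continuous
  obtain ⟨δ, hδpos, hδ⟩ := Metric.uniformContinuous_iff.mp hUC (1/2) (by norm_num)
  obtain ⟨N, hN⟩ := exists_nat_gt (1/δ)
  have hNpos : 0 < (N:ℝ) := lt_trans (by positivity) hN
  have hNstep : (1:ℝ)/N < δ := by
    rw [div_lt_iff₀ hNpos]
    have h1 : 1 < (N:ℝ) * δ := (div_lt_iff₀ hδpos).mp hN
    linarith [mul_comm (N:ℝ) δ]
  set tq : ℕ → unitInterval := fun j => ⟨min ((j:ℝ)/N) 1,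
    le_min (by positivity) zero_le_one, min_le_right _ _⟩ with htq
  have htq_eq : ∀ j : ℕ, j ≤ N → ((tq j : ℝ)) = (j:ℝ)/N := by
    intro j hj
    exact min_eq_left ((div_le_one hNpos).mpr (by exact_mod_cast hj))
  have hq0 : tq 0 = 0 := by
    apply Subtype.ext
    simp [htq]
  have hqN : tq N = 1 := by
    apply Subtype.ext
    rw [show ((1 : unitInterval) : ℝ) = 1 from rfl]
    rw [htq_eq N le_rfl, div_self (ne_of_gt hNpos)]
  set g := liftSeq k lam ht Fc tq with hg
  have hstepdist : ∀ j : ℕ, j < N → ∀ y : Torus k,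
      dist (Fc (tq (j+1), y)) (Fc (tq j, y)) < 1/2 := by
    intro j hj y
    apply hδ
    rw [Prod.dist_eq]
    have hd1 : dist (tq (j+1)) (tq j) = 1/N := by
      rw [Subtype.dist_eq, htq_eq _ (by omega), htq_eq _ (by omega), Real.dist_eq]
      push_cast
      rw [div_sub_div_same, show ((j:ℝ)+1) - (j:ℝ) = 1 by ring]
      exact abs_of_nonneg (by positivity)
    rw [hd1, dist_self]
    rw [max_eq_left (by positivity)]
    exact hNstep
  have key : ∀ j : ℕ, j ≤ N →
      Continuous (g j) ∧ (∀ x, lam • g j x = Fc (tq j, lam • x)) ∧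
      (∀ i, g j a i - g j 0 i = ht a i) := by
    intro j
    induction j with
    | zero =>
      intro _
      refine ⟨htc, fun x => ?_, fun i => ?_⟩
      · show lam • ht x = Fc (tq 0, lam • x)
        rw [hcomm, hq0]
        exact (F.apply_zero (lam • x)).symm
      · show ht a i - ht 0 i = ht a i
        rw [ht0]
        simp
    | succ j ih =>
      intro hj1
      obtain ⟨hc, hsm, hfix⟩ := ih (by omega)
      have hdd : ∀ x i, ‖Fc (tq (j+1), lam • x) i - Fc (tq j, lam • x) i‖ < 1/2 := by
        intro x i
        calc ‖Fc (tq (j+1), lam • x) i - Fc (tq j, lam • x) i‖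
            = dist (Fc (tq (j+1), lam • x) i) (Fc (tq j, lam • x) i) := (dist_eq_norm _ _).symm
          _ ≤ dist (Fc (tq (j+1), lam • x)) (Fc (tq j, lam • x)) := dist_le_pi_dist _ _ i
          _ < 1/2 := hstepdist j (by omega) _
      have hgsucc : ∀ x i, g (j+1) x i = g j x i +
          torusSec lam (Fc (tq (j+1), lam • x) i - Fc (tq j, lam • x) i) := fun x i => rfl
      have hsmc : Continuous (fun x : Torus k => lam • x) := continuous_nsmul lam
      refine ⟨?_, fun x => ?_, fun i => ?_⟩
      · apply continuous_pi
        intro i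
        apply Continuous.add ((continuous_apply i).comp hc)
        have hdc : Continuous (fun x : Torus k =>
            Fc (tq (j+1), lam • x) i - Fc (tq j, lam • x) i) := by
          apply Continuous.sub
          · exact (continuous_apply i).comp (Fc.continuous.comp (continuous_const.prodMk hsmc))
          · exact (continuous_apply i).comp (Fc.continuous.comp (continuous_const.prodMk hsmc))
        rw [continuous_iff_continuousAt]
        intro x
        show ContinuousAt ((torusSec lam) ∘ (fun x : Torus k =>
          Fc (tq (j+1), lam • x) i - Fc (tq j, lam • x) i)) x
        exact ContinuousAt.comp (f := fun x : Torus k =>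
            Fc (tq (j+1), lam • x) i - Fc (tq j, lam • x) i)
          (torusSec_continuousAt lam (hdd x i)) hdc.continuousAt
      · funext i
        rw [Pi.smul_apply, hgsucc, smul_add, torusSec_smul lam hlam]
        have hxi := congrFun (hsm x) i
        rw [Pi.smul_apply] at hxi
        rw [hxi]
        abel
      · rw [hgsucc, hgsucc, ha, smul_zero, add_sub_add_right_eq_sub]
        exact hfix i
  obtain ⟨hcN, hsmN, hfixN⟩ := key N le_rfl
  have hidN : ∀ x, lam • g N x = lam • x := by
    intro x
    rw [hsmN, hqN]
    exact F.apply_one (lam • x)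
  have hconst : ∀ i : Fin k, g N a i - a i = g N 0 i - (0 : Torus k) i := by
    intro i
    apply const_of_torsion lam hlam (fun x : Torus k => g N x i - x i)
    · exact ((continuous_apply i).comp hcN).sub (continuous_apply i)
    · intro x
      have hx := congrFun (hidN x) i
      rw [Pi.smul_apply, Pi.smul_apply] at hx
      rw [smul_sub, hx, sub_self]
  funext i
  have h1 := hfixN i
  have h2 := hconst i
  rw [Pi.zero_apply, sub_zero] at h2
  have h3 : g N a i = g N 0 i + a i := by rw [← h2]; abel
  rw [← h1, h3]
  abel
end

section
/- Let h : T^k → T^k be a homeomorphism homotopic to the identity with h(0) = 0. Then for every ε > 0 there exists λ₀ ∈ ℕ such that for every integer λ ≥ λ₀ and every continuous map h̃ : T^k → T^k with p_λ ∘ h̃ = h ∘ p_λ and h̃(0) = 0, one has dist(h̃(x), x) < ε for all x ∈ T^k. -/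
open AddCircle

noncomputable def tdel : AddCircle (1:ℝ) → ℝ := fun b => (equivIco 1 (-(1/2)) b : ℝ)

private lemma tdel_coe (b : AddCircle (1:ℝ)) : ((tdel b : ℝ) : AddCircle (1:ℝ)) = b :=
  (equivIco 1 (-(1/2)) ).symm_apply_apply b

private lemma tdel_mem (b : AddCircle (1:ℝ)) : tdel b ∈ Set.Ico (-(1/2) : ℝ) (1/2) := by
  have := (equivIco 1 (-(1/2)) b).2
  norm_num at this ⊢
  exact this

private lemma tdel_abs (b : AddCircle (1:ℝ)) : |tdel b| ≤ 1/2 := by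
  have := tdel_mem b
  rw [abs_le]; constructor <;> [linarith [this.1]; linarith [this.2]]

private lemma norm_half : ‖((-(1/2) : ℝ) : AddCircle (1:ℝ))‖ = 1/2 := by
  have : ((-(1/2) : ℝ) : AddCircle (1:ℝ)) = -((1/2 : ℝ) : AddCircle (1:ℝ)) := by
    rw [← QuotientAddGroup.mk_neg]
  rw [this, norm_neg]
  simpa using AddCircle.norm_half_period_eq (p := (1:ℝ))

private lemma tdel_continuousAt {b : AddCircle (1:ℝ)} (hb : ‖b‖ < 1/2) : ContinuousAt tdel b := by
  have hne : b ≠ ((-(1/2) : ℝ) : AddCircle (1:ℝ)) := by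
    intro e; rw [e, norm_half] at hb; linarith
  exact (continuous_subtype_val.continuousAt).comp (continuousAt_equivIco 1 (-(1/2)) hne)

open unitInterval in
private lemma exists_lift {X : Type*} [MetricSpace X] [CompactSpace X]
    (g : C(unitInterval × X, AddCircle (1:ℝ))) :
    ∃ (C : ℝ) (G : X → ℝ), Continuous G ∧ (∀ x, |G x| ≤ C) ∧
      ∀ x, ((G x : ℝ) : AddCircle (1:ℝ)) = g (1, x) - g (0, x) := by
  have hu : UniformContinuous g := CompactSpace.uniformContinuous_of_continuous g.continuous
  obtain ⟨δ, hδ, hδ'⟩ := Metric.uniformContinuous_iff.mp hu (1/2) (by norm_num)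
  obtain ⟨n, hnδ⟩ := exists_nat_one_div_lt hδ
  set m : ℕ := n + 1 with hm
  have hm0 : (0:ℝ) < m := by positivity
  set t : ℕ → unitInterval := fun j => Set.projIcc 0 1 zero_le_one ((j : ℝ) / m) with ht
  have hstep : ∀ j : ℕ, dist (t (j+1)) (t j) < δ := by
    intro j
    have h1 : dist (t (j+1)) (t j) ≤ dist (((j:ℝ)+1) / m) ((j:ℝ) / m) := by
      simpa [t] using LipschitzWith.dist_le_mul (LipschitzWith.projIcc (zero_le_one (α := ℝ)))
        (((j:ℝ)+1)/m) ((j:ℝ)/m)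
    have h2 : dist (((j:ℝ)+1) / m) ((j:ℝ) / m) = 1 / m := by
      rw [Real.dist_eq, div_sub_div_same, show ((j:ℝ)+1-(j:ℝ)) = 1 by ring,
        abs_of_nonneg (by positivity)]
    calc dist (t (j+1)) (t j) ≤ 1 / m := by rw [← h2]; exact_mod_cast h1
      _ ≤ 1 / (n+1) := by norm_num [hm]
      _ < δ := hnδ
  have hsmall : ∀ (j : ℕ) (x : X), ‖g (t (j+1), x) - g (t j, x)‖ < 1/2 := by
    intro j x
    rw [← dist_eq_norm]
    apply hδ'
    rw [Prod.dist_eq]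
    simp only [dist_self]
    exact max_lt (hstep j) hδ
  set G : X → ℝ := fun x => ∑ j ∈ Finset.range m, tdel (g (t (j+1), x) - g (t j, x)) with hG
  refine ⟨m / 2, G, ?_, ?_, ?_⟩
  · rw [continuous_iff_continuousAt]
    intro x
    apply tendsto_finset_sum
    intro j _
    have hF : Continuous fun y : X => g (t (j+1), y) - g (t j, y) :=
      (g.continuous.comp (Continuous.prodMk_right (t (j+1)))).sub
        (g.continuous.comp (Continuous.prodMk_right (t j)))
    exact ContinuousAt.comp (g := tdel) (f := fun y : X => g (t (j+1), y) - g (t j, y))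
      (x := x) (tdel_continuousAt (hsmall j x)) hF.continuousAt
  · intro x
    calc |G x| ≤ ∑ j ∈ Finset.range m, |tdel (g (t (j+1), x) - g (t j, x))| :=
          Finset.abs_sum_le_sum_abs _ _
      _ ≤ ∑ _j ∈ Finset.range m, (1/2 : ℝ) := Finset.sum_le_sum fun j _ => tdel_abs _
      _ = m / 2 := by simp; ring
  · intro x
    have : ((G x : ℝ) : AddCircle (1:ℝ))
        = ∑ j ∈ Finset.range m, (((tdel (g (t (j+1), x) - g (t j, x)) : ℝ) : AddCircle (1:ℝ))) := by
      exact map_sum (QuotientAddGroup.mk' (AddSubgroup.zmultiples (1:ℝ))) _ _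
    rw [this]
    have : ∀ j ∈ Finset.range m, (((tdel (g (t (j+1), x) - g (t j, x)) : ℝ) : AddCircle (1:ℝ)))
        = g (t (j+1), x) - g (t j, x) := fun j _ => tdel_coe _
    rw [Finset.sum_congr rfl this, Finset.sum_range_sub (fun j => g (t j, x))]
    have h0 : t 0 = 0 := by simp [t]
    have h1 : t m = 1 := by
      simp only [t, Set.projIcc]
      rw [div_self hm0.ne']
      norm_num
    rw [h0, h1]

private lemma norm_coe_le (r : ℝ) : ‖((r : ℝ) : AddCircle (1:ℝ))‖ ≤ |r| := by
  rw [show ((r:ℝ) : AddCircle (1:ℝ)) = ((r:ℝ) : UnitAddCircle) from rfl, UnitAddCircle.norm_eq]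
  simpa using round_le r 0

private lemma torsion_eq_zero {lam : ℕ} (hlam : 1 ≤ lam) {a : AddCircle (1:ℝ)}
    (h1 : lam • a = 0) (h2 : ‖a‖ < 1 / lam) : a = 0 := by
  induction a using QuotientAddGroup.induction_on with | H r => ?_
  rw [← AddCircle.coe_nsmul, AddCircle.coe_eq_zero_iff] at h1
  obtain ⟨z, hz⟩ := h1
  rw [show ((r:ℝ) : AddCircle (1:ℝ)) = ((r:ℝ) : UnitAddCircle) from rfl,
    UnitAddCircle.norm_eq] at h2
  have hlam' : (0:ℝ) < lam := by exact_mod_cast hlam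
  have key : (lam:ℝ) * (r - round r) = (z - lam * round r : ℤ) := by
    have hz' : (lam:ℝ) * r = z := by
      have := congrArg (fun t : ℝ => t) hz
      push_cast at this ⊢
      simpa [smul_eq_mul] using this.symm
    push_cast
    rw [mul_sub, hz']
  have habs : |((z - lam * round r : ℤ) : ℝ)| < 1 := by
    rw [← key, abs_mul, abs_of_pos hlam']
    calc (lam:ℝ) * |r - round r| < lam * (1/lam) := by
          exact mul_lt_mul_of_pos_left h2 hlam'
      _ = 1 := by field_simp
  have hz0 : (z - lam * round r : ℤ) = 0 := by
    have : |(z - lam * round r : ℤ)| < 1 := by exact_mod_cast habs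
    have := abs_lt.mp this
    omega
  have : r - round r = 0 := by
    have := key
    rw [hz0] at this
    simpa [hlam'.ne'] using this
  have hr : r = (round r : ℝ) := by linarith [sub_eq_zero.mp this]
  rw [hr, AddCircle.coe_eq_zero_iff]
  exact ⟨round r, by simp⟩


/-- **Lemma (lifts of a homeomorphism homotopic to the identity are uniformly small).**
Let `h : T^k → T^k` be a homeomorphism homotopic to the identity with `h 0 = 0`.  Then
for every `ε > 0` there is `λ₀ ∈ ℕ` such that for every integer `λ ≥ λ₀` and every
continuous `h̃ : T^k → T^k` with `p_λ ∘ h̃ = h ∘ p_λ` and `h̃ 0 = 0` one has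
`dist (h̃ x, x) < ε` for all `x`. -/
theorem lift_uniformly_close_to_id (k : ℕ) (h : Torus k ≃ₜ Torus k)
    (hh : (h : C(Torus k, Torus k)).Homotopic (ContinuousMap.id (Torus k)))
    (h0 : h 0 = 0) :
    ∀ ε : ℝ, 0 < ε → ∃ lam₀ : ℕ, ∀ lam : ℕ, lam₀ ≤ lam →
      ∀ ht : Torus k → Torus k, Continuous ht →
        (∀ a : Torus k, lam • ht a = h (lam • a)) → ht 0 = 0 →
        ∀ x : Torus k, dist (ht x) x < ε := by
  intro ε hε
  haveI : Fact ((0:ℝ) < 1) := ⟨one_pos⟩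
  obtain ⟨H⟩ := hh
  have hGi : ∀ i : Fin k, ∃ (C : ℝ) (G : Torus k → ℝ), Continuous G ∧ (∀ x, |G x| ≤ C) ∧
      ∀ x : Torus k, ((G x : ℝ) : AddCircle (1:ℝ)) = x i - h x i := by
    intro i
    have hgc : Continuous fun q : unitInterval × Torus k => H q i - q.2 i :=
      ((continuous_apply i).comp H.continuous).sub ((continuous_apply i).comp continuous_snd)
    obtain ⟨C, G, hc, hb, hco⟩ := exists_lift ⟨fun q : unitInterval × Torus k => H q i - q.2 i, hgc⟩
    refine ⟨C, G, hc, hb, fun x => ?_⟩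
    have h1 : H (1, x) = x := H.apply_one x
    have h0' : H (0, x) = h x := H.apply_zero x
    rw [hco x]
    simp only [ContinuousMap.coe_mk, h1, h0']
    abel
  choose C G hGc hGb hGcoe using hGi
  set Ctot : ℝ := ∑ i, C i with hCtot
  have hCi_nonneg : ∀ i, 0 ≤ C i := fun i => le_trans (abs_nonneg _) (hGb i 0)
  have hCle : ∀ i x, |G i x| ≤ Ctot := fun i x =>
    (hGb i x).trans (Finset.single_le_sum (f := C) (fun j _ => hCi_nonneg j) (Finset.mem_univ i))
  have hC0 : 0 ≤ Ctot := Finset.sum_nonneg fun j _ => hCi_nonneg j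
  refine ⟨max 1 ⌈(2*Ctot+1)/ε⌉₊, fun lam hlam ht htc hlift ht0 x => ?_⟩
  have hlam1 : 1 ≤ lam := le_trans (le_max_left _ _) hlam
  have hlamR : (0:ℝ) < lam := by exact_mod_cast hlam1
  have hbound : 2*Ctot / lam < ε := by
    have h1 : ((2*Ctot+1)/ε) ≤ (⌈(2*Ctot+1)/ε⌉₊ : ℝ) := Nat.le_ceil _
    have h2 : (⌈(2*Ctot+1)/ε⌉₊ : ℝ) ≤ lam := by exact_mod_cast le_trans (le_max_right _ _) hlam
    have h3 : 2*Ctot+1 ≤ ε * lam := by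
      have := (div_le_iff₀ hε).mp (h1.trans h2)
      linarith [this]
    rw [div_lt_iff₀ hlamR]
    linarith
  -- the "small correction" map
  set q : Torus k → Torus k := fun y i => ((-(G i y) / lam : ℝ) : AddCircle (1:ℝ)) with hqdef
  have hqc : Continuous q := continuous_pi fun i =>
    (AddCircle.continuous_mk' 1).comp (((hGc i).neg).div_const _)
  have hq_smul : ∀ (y : Torus k) (i : Fin k), lam • q y i = h y i - y i := by
    intro y i
    have : lam • q y i = (((lam : ℕ) • (-(G i y) / lam) : ℝ) : AddCircle (1:ℝ)) :=
      (AddCircle.coe_nsmul 1).symm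
    rw [this]
    have harith : ((lam : ℕ) • (-(G i y) / lam) : ℝ) = -(G i y) := by
      field_simp
      rw [nsmul_eq_mul, mul_neg, mul_div_assoc', mul_div_cancel_left₀ _ hlamR.ne']
    rw [harith]
    have := hGcoe i y
    rw [show ((-(G i y) : ℝ) : AddCircle (1:ℝ)) = -((G i y : ℝ) : AddCircle (1:ℝ)) from
      QuotientAddGroup.mk_neg _ _, this]
    abel
  set u : Torus k → Torus k := fun x => ht x - x - q (lam • x) with hudef
  have huc : Continuous u := (htc.sub continuous_id).sub (hqc.comp (continuous_id.nsmul lam))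
  have hu_tor : ∀ (y : Torus k) (i : Fin k), lam • u y i = 0 := by
    intro y i
    have expand : u y i = ht y i - y i - q (lam • y) i := rfl
    rw [expand, smul_sub, smul_sub]
    have h1 : lam • ht y i = h (lam • y) i := by
      have := congrFun (hlift y) i
      simpa using this
    have h2 : lam • q (lam • y) i = h (lam • y) i - (lam • y) i := hq_smul (lam • y) i
    have h3 : (lam • y) i = lam • y i := rfl
    rw [h1, h2, h3]
    abel
  -- u is constant by connectedness and discreteness of torsion
  have hu_const : ∀ y : Torus k, u y = u 0 := by
    have hclopen : IsClopen {y : Torus k | u y = u 0} := by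
      constructor
      · exact isClosed_eq huc continuous_const
      · rw [Metric.isOpen_iff]
        intro y₀ hy₀
        have hpos : (0:ℝ) < 1 / lam := by positivity
        obtain ⟨δ, hδ, hball⟩ := Metric.continuous_iff.mp huc y₀ (1/lam) hpos
        refine ⟨δ, hδ, fun y hy => ?_⟩
        have hd : dist (u y) (u y₀) < 1/lam := hball y (Metric.mem_ball.mp hy)
        have : u y = u y₀ := by
          funext i
          have hzero : lam • (u y i - u y₀ i) = 0 := by
            rw [smul_sub, hu_tor y i, hu_tor y₀ i, sub_zero]
          have hnorm : ‖u y i - u y₀ i‖ < 1/lam := by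
            rw [← dist_eq_norm]
            exact lt_of_le_of_lt (dist_le_pi_dist (u y) (u y₀) i) hd
          have := torsion_eq_zero hlam1 hzero hnorm
          exact sub_eq_zero.mp this
        rw [Set.mem_setOf_eq, this]
        exact hy₀
    have huniv : {y : Torus k | u y = u 0} = Set.univ :=
      hclopen.eq_univ ⟨0, rfl⟩
    intro y
    have : y ∈ {y : Torus k | u y = u 0} := huniv ▸ Set.mem_univ y
    exact this
  -- conclude
  have hformula : ∀ i, ht x i - x i
      = (((-(G i (lam • x)) / lam - -(G i 0) / lam : ℝ)) : AddCircle (1:ℝ)) := by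
    intro i
    have h1 : u x = u 0 := hu_const x
    have h2 : u 0 = - q 0 := by
      rw [hudef]
      simp only [smul_zero, ht0]
      abel
    have h3 : ht x - x = q (lam • x) - q 0 := by
      have : ht x - x - q (lam • x) = - q 0 := h1.trans h2
      have := congrArg (· + q (lam • x)) this
      simpa [sub_add_cancel, sub_eq_iff_eq_add, neg_add_eq_sub] using this
    have h4 : ht x i - x i = q (lam • x) i - q 0 i := congrFun h3 i
    rw [h4, hqdef]
    exact (QuotientAddGroup.mk_sub _ _ _).symm
  rw [dist_pi_lt_iff hε]
  intro i
  rw [dist_eq_norm, hformula i]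
  calc ‖((((-(G i (lam • x)) / lam - -(G i 0) / lam : ℝ)) : AddCircle (1:ℝ)))‖
      ≤ |(-(G i (lam • x)) / lam - -(G i 0) / lam : ℝ)| := norm_coe_le _
    _ ≤ 2*Ctot / lam := by
        rw [div_sub_div_same, abs_div, abs_of_pos hlamR]
        gcongr
        calc |(-(G i (lam • x)) - -(G i 0))| ≤ |G i (lam • x)| + |G i 0| := by
              rw [show (-(G i (lam • x)) - -(G i 0)) = G i 0 - G i (lam • x) by ring]
              exact (abs_sub _ _).trans (by rw [add_comm])
          _ ≤ Ctot + Ctot := add_le_add (hCle i _) (hCle i _)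
          _ = 2*Ctot := by ring
    _ < ε := hbound
end
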